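/- The abelianization of the hybrid H'(3) is a finite group. -/

import Mathlib

noncomputable section

open Matrix Complex

/-- GL(3,ℂ): the group of invertible 3×3 complex matrices. -/
abbrev GL3 : Type := (Matrix (Fin 3) (Fin 3) ℂ)ˣ

/-- PGL(3,ℂ): the quotient of GL(3,ℂ) by its center. -/
abbrev PGL3 : Type := GL3 ⧸ Subgroup.center GL3

/-- The projection GL(3,ℂ) → PGL(3,ℂ). -/
def pgl : GL3 →* PGL3 := QuotientGroup.mk' (Subgroup.center GL3)

/-- The class [M] ∈ PGL(3,ℂ) of an (invertible) matrix M. -/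
noncomputable def cls (M : Matrix (Fin 3) (Fin 3) ℂ) : PGL3 := by
  classical exact if h : IsUnit M then pgl h.unit else 1

/-- The Hermitian matrix of signature (2,1) defining the Siegel model. -/
def Hform : Matrix (Fin 3) (Fin 3) ℂ := !![0,0,1; 0,1,0; 1,0,0]

lemma Hform_mul_Hform : Hform * Hform = 1 := by
  rw [Hform, Matrix.mul_fin_three, Matrix.one_fin_three]
  norm_num

/-- U(2,1,O): the subgroup of GL(3,ℂ) of matrices with entries in O
satisfying Mᴴ H M = H, for O a subring of ℂ closed under conjugation. -/
def U21 (O : Subring ℂ) (hO : ∀ z ∈ O, (starRingEnd ℂ) z ∈ O) : Subgroup GL3 where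
  carrier := {M : GL3 | (∀ i j, (M : Matrix (Fin 3) (Fin 3) ℂ) i j ∈ O) ∧
      (M : Matrix (Fin 3) (Fin 3) ℂ)ᴴ * Hform * (M : Matrix (Fin 3) (Fin 3) ℂ) = Hform}
  one_mem' := by
    constructor
    · intro i j
      by_cases h : i = j <;> simp [Matrix.one_apply, h, Subring.one_mem, Subring.zero_mem]
    · simp
  mul_mem' := by
    rintro a b ⟨ha1, ha2⟩ ⟨hb1, hb2⟩
    constructor
    · intro i j
      rw [Units.val_mul, Matrix.mul_apply]
      exact Subring.sum_mem _ fun k _ => Subring.mul_mem _ (ha1 i k) (hb1 k j)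
    · rw [Units.val_mul, Matrix.conjTranspose_mul]
      calc (↑b)ᴴ * (↑a)ᴴ * Hform * ((↑a : Matrix (Fin 3) (Fin 3) ℂ) * ↑b)
          = (↑b)ᴴ * ((↑a)ᴴ * Hform * ↑a) * ↑b := by simp only [mul_assoc]
        _ = (↑b)ᴴ * Hform * ↑b := by rw [ha2]
        _ = Hform := hb2
  inv_mem' := by
    rintro a ⟨ha1, ha2⟩
    have hBA : (Hform * (a.val)ᴴ * Hform) * a.val = 1 := by
      calc (Hform * (a.val)ᴴ * Hform) * a.val
          = Hform * ((a.val)ᴴ * Hform * a.val) := by simp only [mul_assoc]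
        _ = Hform * Hform := by rw [ha2]
        _ = 1 := Hform_mul_Hform
    have hInv : (a⁻¹).val = Hform * (a.val)ᴴ * Hform :=
      Units.inv_eq_of_mul_eq_one_left hBA
    have hab : a.val * (a⁻¹).val = 1 := a.mul_inv
    constructor
    · intro i j
      rw [hInv]
      simp only [Matrix.mul_apply, Fin.sum_univ_three]
      fin_cases i <;> fin_cases j <;>
        simp [Hform, Matrix.conjTranspose_apply, Matrix.vecHead, Matrix.vecTail, Function.comp] <;>
        exact hO _ (ha1 _ _)
    · calc ((a⁻¹).val)ᴴ * Hform * (a⁻¹).val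
          = ((a⁻¹).val)ᴴ * ((a.val)ᴴ * Hform * a.val) * (a⁻¹).val := by rw [ha2]
        _ = (a.val * (a⁻¹).val)ᴴ * Hform * (a.val * (a⁻¹).val) := by
            rw [Matrix.conjTranspose_mul]; simp only [mul_assoc]
        _ = Hform := by rw [hab]; simp

/-- PU(2,1,O): the image of U(2,1,O) in PGL(3,ℂ). -/
def PU21 (O : Subring ℂ) (hO : ∀ z ∈ O, (starRingEnd ℂ) z ∈ O) : Subgroup PGL3 :=
  (U21 O hO).map pgl

lemma conjClosed (s : Set ℂ) (h : ∀ z ∈ s, (starRingEnd ℂ) z ∈ Subring.closure s) :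
    ∀ z ∈ Subring.closure s, (starRingEnd ℂ) z ∈ Subring.closure s := by
  intro z hz
  have hle : Subring.closure s ≤ (Subring.closure s).comap (starRingEnd ℂ) :=
    Subring.closure_le.mpr fun x hx => Subring.mem_comap.mpr (h x hx)
  exact Subring.mem_comap.mp (hle hz)


-- test ring pieces
section rings
open Matrix Complex

/-- ω = (−1+i√3)/2, a primitive cube root of unity. -/
def omega3 : ℂ := (-1 + Complex.I * (Real.sqrt 3 : ℝ)) / 2

/-- O₃ = ℤ[ω], the Eisenstein integers. -/
def O3 : Subring ℂ := Subring.closure {omega3}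

lemma conj_omega3 : (starRingEnd ℂ) omega3 = -1 - omega3 := by
  rw [omega3]
  rw [map_div₀, map_add, _root_.map_mul, Complex.conj_I, Complex.conj_ofReal]
  rw [map_neg, _root_.map_one, _root_.map_ofNat]
  ring

lemma hO3 : ∀ z ∈ O3, (starRingEnd ℂ) z ∈ O3 := by
  apply conjClosed
  intro z hz
  rw [Set.mem_singleton_iff] at hz
  subst hz
  rw [conj_omega3]
  exact sub_mem (neg_mem (Subring.one_mem _)) (Subring.subset_closure rfl)

/-- O₁ = ℤ[i], the Gaussian integers. -/
def O1 : Subring ℂ := Subring.closure {Complex.I}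

lemma hO1 : ∀ z ∈ O1, (starRingEnd ℂ) z ∈ O1 := by
  apply conjClosed
  intro z hz
  rw [Set.mem_singleton_iff] at hz
  subst hz
  rw [Complex.conj_I]
  exact neg_mem (Subring.subset_closure rfl)

/-- τ = (1+i√7)/2. -/
def tau7 : ℂ := (1 + Complex.I * (Real.sqrt 7 : ℝ)) / 2

/-- O₇ = ℤ[(1+i√7)/2], the ring of integers of ℚ(i√7). -/
def O7 : Subring ℂ := Subring.closure {tau7}

lemma conj_tau7 : (starRingEnd ℂ) tau7 = 1 - tau7 := by
  rw [tau7]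
  rw [map_div₀, map_add, _root_.map_mul, Complex.conj_I, Complex.conj_ofReal]
  rw [_root_.map_one, _root_.map_ofNat]
  ring

lemma hO7 : ∀ z ∈ O7, (starRingEnd ℂ) z ∈ O7 := by
  apply conjClosed
  intro z hz
  rw [Set.mem_singleton_iff] at hz
  subst hz
  rw [conj_tau7]
  exact sub_mem (Subring.one_mem _) (Subring.subset_closure rfl)

end rings

section matrices
open Matrix Complex

/-- The Cayley transform J. -/
def Jmat : Matrix (Fin 3) (Fin 3) ℂ := !![1,1,0; 0,1,-1; 1,1,-1]

-- d = 3 ------------------------------------------------------------------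
def E1d3 : Matrix (Fin 3) (Fin 3) ℂ :=
  !![omega3^2, omega3^2 - 1, omega3 + 2;
     Complex.I * (Real.sqrt 3 : ℝ), 1 + Complex.I * (Real.sqrt 3 : ℝ), omega3^2 - 1;
     Complex.I * (Real.sqrt 3 : ℝ), Complex.I * (Real.sqrt 3 : ℝ), omega3^2]

def U1d3 : Matrix (Fin 3) (Fin 3) ℂ :=
  !![1, 0, Complex.I * (Real.sqrt 3 : ℝ); 0, 1, 0; 0, 0, 1]

def U2d3 : Matrix (Fin 3) (Fin 3) ℂ :=
  !![1, 0, 0; 0, 1, 0; Complex.I * (Real.sqrt 3 : ℝ), 0, 1]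

def I1d3 : Matrix (Fin 3) (Fin 3) ℂ := Jmat⁻¹ * !![-1,0,0; 0,1,0; 0,0,-1] * Jmat

def I2d3 : Matrix (Fin 3) (Fin 3) ℂ := Jmat⁻¹ * !![1,0,0; 0,-1,0; 0,0,-1] * Jmat

/-- The Falbel–Parker generators of PU(2,1,O₃). -/
def Pd3 : Matrix (Fin 3) (Fin 3) ℂ := !![1, 1, omega3; 0, omega3, -omega3; 0, 0, 1]

def Qd3 : Matrix (Fin 3) (Fin 3) ℂ := !![1, 1, omega3; 0, -1, 1; 0, 0, 1]

def Rd3 : Matrix (Fin 3) (Fin 3) ℂ := !![0, 0, 1; 0, -1, 0; 1, 0, 0]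

/-- The hybrid H(3). -/
def H3 : Subgroup PGL3 :=
  Subgroup.closure {cls E1d3, cls U1d3, cls U2d3, cls I1d3, cls I2d3}

/-- The hybrid H̃(3). -/
def Ht3 : Subgroup PGL3 := Subgroup.closure {cls E1d3, cls U1d3, cls U2d3}

/-- The hybrid H'(3). -/
def H'3 : Subgroup PGL3 :=
  Subgroup.closure {cls (Pd3^2 * (Rd3 * Qd3^2) * (Pd3^2)⁻¹), cls (Qd3^2), cls (Rd3 * Qd3^2 * Rd3)}

/-- The Eisenstein–Picard modular group Γ(3) = PU(2,1,O₃). -/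
def Gamma3 : Subgroup PGL3 := PU21 O3 hO3

-- d = 1 ------------------------------------------------------------------
def E1d1 : Matrix (Fin 3) (Fin 3) ℂ :=
  !![Complex.I, -1 + Complex.I, 1 - Complex.I;
     -2 * Complex.I, 1 - 2 * Complex.I, -1 + Complex.I;
     -2 * Complex.I, -2 * Complex.I, Complex.I]

def U1d1 : Matrix (Fin 3) (Fin 3) ℂ := !![1, 0, Complex.I; 0, 1, 0; 0, 0, 1]

def E2d1 : Matrix (Fin 3) (Fin 3) ℂ :=
  !![Complex.I, 2 * Complex.I, -2 * Complex.I;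
     1 - Complex.I, 1 - 2 * Complex.I, 2 * Complex.I;
     1 - Complex.I, 1 - Complex.I, Complex.I]

def U2d1 : Matrix (Fin 3) (Fin 3) ℂ := !![1, 0, 0; 0, 1, 0; Complex.I, 0, 1]

/-- The Falbel–Francsics–Parker generators of PU(2,1,O₁). -/
def I0d1 : Matrix (Fin 3) (Fin 3) ℂ := !![0, 0, 1; 0, -1, 0; 1, 0, 0]

def Qd1 : Matrix (Fin 3) (Fin 3) ℂ :=
  !![1, 1 - Complex.I, -1; 0, -1, 1 + Complex.I; 0, 0, 1]

def Td1 : Matrix (Fin 3) (Fin 3) ℂ := !![1, 0, Complex.I; 0, 1, 0; 0, 0, 1]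

def R1d1 : Matrix (Fin 3) (Fin 3) ℂ := Jmat⁻¹ * !![Complex.I,0,0; 0,1,0; 0,0,1] * Jmat

def R2d1 : Matrix (Fin 3) (Fin 3) ℂ := Jmat⁻¹ * !![1,0,0; 0,Complex.I,0; 0,0,1] * Jmat

/-- The hybrid H(1). -/
def H1 : Subgroup PGL3 := Subgroup.closure {cls E1d1, cls U1d1, cls E2d1, cls U2d1}

/-- The hybrid H'(1). -/
def H'1 : Subgroup PGL3 := Subgroup.closure {cls R1d1, cls R2d1, cls U1d1, cls U2d1}

/-- The Gauss–Picard modular group Γ(1) = PU(2,1,O₁). -/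
def Gamma1 : Subgroup PGL3 := PU21 O1 hO1

-- d = 7 ------------------------------------------------------------------
def U1d7 : Matrix (Fin 3) (Fin 3) ℂ :=
  !![1, 0, Complex.I * (Real.sqrt 7 : ℝ); 0, 1, 0; 0, 0, 1]

def U2d7 : Matrix (Fin 3) (Fin 3) ℂ :=
  !![1, 0, 0; 0, 1, 0; Complex.I * (Real.sqrt 7 : ℝ), 0, 1]

def A1d7 : Matrix (Fin 3) (Fin 3) ℂ :=
  !![-(1/2) + Complex.I * (Real.sqrt 7 : ℝ) / 2, -(3/2) + Complex.I * (Real.sqrt 7 : ℝ) / 2,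
       1/2 - Complex.I * (Real.sqrt 7 : ℝ) / 2;
     1, 2, -(3/2) + Complex.I * (Real.sqrt 7 : ℝ) / 2;
     1, 1, -(1/2) + Complex.I * (Real.sqrt 7 : ℝ) / 2]

def B1d7 : Matrix (Fin 3) (Fin 3) ℂ := !![1, 0, 0; -2, -1, 0; -2, -2, 1]

def A2d7 : Matrix (Fin 3) (Fin 3) ℂ :=
  !![-(1/2) + Complex.I * (Real.sqrt 7 : ℝ) / 2, -1, 1;
     3/2 - Complex.I * (Real.sqrt 7 : ℝ) / 2, 2, -1;
     1/2 - Complex.I * (Real.sqrt 7 : ℝ) / 2, 3/2 - Complex.I * (Real.sqrt 7 : ℝ) / 2,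
       -(1/2) + Complex.I * (Real.sqrt 7 : ℝ) / 2]

def B2d7 : Matrix (Fin 3) (Fin 3) ℂ := !![1, 2, -2; 0, -1, 2; 0, 0, 1]

/-- The Mark–Paupert generators of PU(2,1,O₇). -/
def T1d7 : Matrix (Fin 3) (Fin 3) ℂ :=
  !![1, -1, -(1/2) + Complex.I * (Real.sqrt 7 : ℝ) / 2; 0, 1, 1; 0, 0, 1]

def Rd7 : Matrix (Fin 3) (Fin 3) ℂ := !![1, 0, 0; 0, -1, 0; 0, 0, 1]

def Id7 : Matrix (Fin 3) (Fin 3) ℂ := !![0, 0, 1; 0, -1, 0; 1, 0, 0]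

/-- The hybrid H(7). -/
def H7 : Subgroup PGL3 :=
  Subgroup.closure {cls U1d7, cls U2d7, cls A1d7, cls A2d7, cls B1d7, cls B2d7}

/-- The Picard modular group Γ(7) = PU(2,1,O₇). -/
def Gamma7 : Subgroup PGL3 := PU21 O7 hO7

end matrices

section presented
/-- The relators c², a⁶, aca⁻¹c⁻¹, (ab)³, (cab)³, b² in the free group on a,b,c
(a = of 0, b = of 1, c = of 2). -/
def relsG : Set (FreeGroup (Fin 3)) :=
  {(FreeGroup.of 2)^2, (FreeGroup.of 0)^6,
   FreeGroup.of 0 * FreeGroup.of 2 * (FreeGroup.of 0)⁻¹ * (FreeGroup.of 2)⁻¹,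
   (FreeGroup.of 0 * FreeGroup.of 1)^3,
   (FreeGroup.of 2 * FreeGroup.of 0 * FreeGroup.of 1)^3,
   (FreeGroup.of 1)^2}

/-- The presented group G = ⟨a,b,c | c², a⁶, [a,c], (ab)³, (cab)³, b²⟩. -/
abbrev Gpres := PresentedGroup relsG
end presented

/-!
`H'(3)` is generated by `a = [P²(RQ²)P⁻²]`, `b = [Q²]` and `c = [RQ²R]`. The matrix `B = RQ²` is
`!![0, 0, 1; 0, -1, 0; 1, 0, t]` with `t = 1 + 2ω`, and `t² = -3` forces `B⁶ = 1`. Hence `a`, a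
conjugate of `[B]`, and `cb = [B²]` have finite order; so does `ac`, whose square is represented by
the scalar matrix `ω • 1`. The images of `a`, `b`, `c` in the abelianization are therefore torsion,
and a finitely generated abelian torsion group is finite.
-/

namespace Abelianization

variable {G : Type*} [Group G]

theorem of_surjective : Function.Surjective (of : G →* Abelianization G) :=
  QuotientGroup.mk_surjective

theorem finite_of_closure_eq_top {s : Set G}
    (hs : s.Finite) (hG : Subgroup.closure s = ⊤)
    (h : ∀ g ∈ s, IsOfFinOrder (of g)) : Finite (Abelianization G) := by
  have : Group.FG G := Group.fg_iff.2 ⟨s, hG, hs⟩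
  have : Group.FG (Abelianization G) := Group.fg_of_surjective of_surjective
  refine CommGroup.finite_of_fg_isMulTorsion _ fun x ↦ ?_
  obtain ⟨g, rfl⟩ := of_surjective x
  have hle : Subgroup.closure s ≤ (CommGroup.torsion _).comap of := (Subgroup.closure_le _).2 h
  exact hle (hG ▸ Subgroup.mem_top g)

theorem finite_closure_of_isOfFinOrder {a b c : G}
    (ha : IsOfFinOrder a) (hac : IsOfFinOrder (a * c)) (hcb : IsOfFinOrder (c * b)) :
    Finite (Abelianization (Subgroup.closure {a, b, c})) := by
  set H := Subgroup.closure {a, b, c}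
  let a' : H := ⟨a, Subgroup.subset_closure (by simp)⟩
  let b' : H := ⟨b, Subgroup.subset_closure (by simp)⟩
  let c' : H := ⟨c, Subgroup.subset_closure (by simp)⟩
  have isOfFinOrder_of {x : H} (hx : IsOfFinOrder (x : G)) : IsOfFinOrder (of x) :=
    of.isOfFinOrder (Submonoid.isOfFinOrder_coe.1 hx)
  have ha' : IsOfFinOrder (of a') := isOfFinOrder_of ha
  have hc' : IsOfFinOrder (of c') := by
    simpa using ha'.inv.mul (isOfFinOrder_of (x := a' * c') hac)
  have hb' : IsOfFinOrder (of b') := by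
    simpa using hc'.inv.mul (isOfFinOrder_of (x := c' * b') hcb)
  refine finite_of_closure_eq_top ((Set.toFinite _).preimage H.subtype_injective.injOn)
    (Subgroup.closure_preimage_eq_top _) ?_
  rintro x (hx | hx | hx : (x : G) = a ∨ (x : G) = b ∨ (x : G) = c)
  · obtain rfl : x = a' := Subtype.ext hx
    exact ha'
  · obtain rfl : x = b' := Subtype.ext hx
    exact hb'
  · obtain rfl : x = c' := Subtype.ext hx
    exact hc'

end Abelianization

lemma cls_of_isUnit {M : Matrix (Fin 3) (Fin 3) ℂ} (h : IsUnit M) : cls M = pgl h.unit :=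
  dif_pos h

lemma cls_mul {A B : Matrix (Fin 3) (Fin 3) ℂ} (hA : IsUnit A) (hB : IsUnit B) :
    cls (A * B) = cls A * cls B := by
  rw [cls_of_isUnit (hA.mul hB), cls_of_isUnit hA, cls_of_isUnit hB, ← map_mul]
  congr 1
  ext : 1
  simp

lemma isOfFinOrder_cls {M : Matrix (Fin 3) (Fin 3) ℂ} {n : ℕ} (hn : n ≠ 0) (h : M ^ n = 1) :
    IsOfFinOrder (cls M) := by
  have hM := IsUnit.of_pow_eq_one h hn
  rw [cls_of_isUnit hM]
  refine pgl.isOfFinOrder (isOfFinOrder_iff_pow_eq_one.2 ⟨n, Nat.pos_of_ne_zero hn, ?_⟩)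
  ext : 1
  simpa using h

lemma pow_six_eq_one_of_sq_eq_neg_three {R : Type*} [CommRing R] {t : R} (ht : t ^ 2 = -3) :
    !![0, 0, 1; 0, -1, 0; 1, 0, t] ^ 6 = (1 : Matrix (Fin 3) (Fin 3) R) := by
  have hcube : !![0, 0, 1; 0, -1, 0; 1, 0, t] ^ 3 =
      (!![t, 0, -2; 0, -1, 0; -2, 0, -t] : Matrix (Fin 3) (Fin 3) R) := by
    simp only [pow_three, Matrix.mul_fin_three]
    ext i j; fin_cases i <;> fin_cases j <;> simp <;> grind
  rw [show 6 = 3 * 2 from rfl, pow_mul, hcube, sq, Matrix.mul_fin_three, Matrix.one_fin_three]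
  ext i j; fin_cases i <;> fin_cases j <;> simp <;> grind

lemma omega3_sq_add_omega3_add_one : omega3 ^ 2 + omega3 + 1 = 0 := by
  have hsqrt : (Complex.I * (Real.sqrt 3 : ℝ)) ^ 2 = -3 := by
    rw [mul_pow, Complex.I_sq, ← Complex.ofReal_pow, Real.sq_sqrt (by norm_num : (0:ℝ) ≤ 3)]
    norm_num
  rw [omega3]
  linear_combination (1 / 4) * hsqrt

lemma omega3_pow_three : omega3 ^ 3 = 1 := by
  linear_combination (omega3 - 1) * omega3_sq_add_omega3_add_one

lemma Rd3_mul_Rd3 : Rd3 * Rd3 = 1 := by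
  rw [Rd3, Matrix.mul_fin_three, Matrix.one_fin_three]
  simp

lemma Qd3_sq : Qd3 ^ 2 = !![1, 0, 1 + 2 * omega3; 0, 1, 0; 0, 0, 1] := by
  rw [sq, Qd3, Matrix.mul_fin_three]
  ext i j; fin_cases i <;> fin_cases j <;> simp; ring

lemma Rd3_mul_Qd3_sq : Rd3 * Qd3 ^ 2 = !![0, 0, 1; 0, -1, 0; 1, 0, 1 + 2 * omega3] := by
  rw [Qd3_sq, Rd3, Matrix.mul_fin_three]
  simp

lemma Rd3_mul_Qd3_sq_pow_six : (Rd3 * Qd3 ^ 2) ^ 6 = 1 := by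
  rw [Rd3_mul_Qd3_sq]
  exact pow_six_eq_one_of_sq_eq_neg_three (by linear_combination 4 * omega3_sq_add_omega3_add_one)

lemma Pd3_sq : Pd3 ^ 2 = !![1, 1 + omega3, omega3; 0, -1 - omega3, 1; 0, 0, 1] := by
  have := omega3_sq_add_omega3_add_one
  rw [sq, Pd3, Matrix.mul_fin_three]
  ext i j; fin_cases i <;> fin_cases j <;> simp <;> grind

lemma isUnit_det_Pd3_sq : IsUnit (Pd3 ^ 2).det := by
  have hdet : Pd3.det = omega3 := by simp [Pd3, Matrix.det_fin_three]
  rw [Matrix.det_pow, hdet]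
  exact (IsUnit.of_pow_eq_one omega3_pow_three three_ne_zero).pow 2

lemma semiconjBy_Pd3_sq :
    SemiconjBy (Pd3 ^ 2) (Rd3 * Qd3 ^ 2)
      !![omega3, 1 + omega3, -1 - omega3; 1, 0, 1 + omega3; 1, 1, omega3] := by
  have := omega3_sq_add_omega3_add_one
  rw [SemiconjBy, Pd3_sq, Rd3_mul_Qd3_sq]
  simp only [Matrix.mul_fin_three]
  ext i j; fin_cases i <;> fin_cases j <;> simp <;> grind

lemma Pd3_sq_conj :
    Pd3 ^ 2 * (Rd3 * Qd3 ^ 2) * (Pd3 ^ 2)⁻¹ =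
      !![omega3, 1 + omega3, -1 - omega3; 1, 0, 1 + omega3; 1, 1, omega3] := by
  rw [semiconjBy_Pd3_sq.eq, Matrix.mul_nonsing_inv_cancel_right _ _ isUnit_det_Pd3_sq]

lemma Pd3_sq_conj_pow_six : (Pd3 ^ 2 * (Rd3 * Qd3 ^ 2) * (Pd3 ^ 2)⁻¹) ^ 6 = 1 := by
  have h := (semiconjBy_Pd3_sq.pow_right 6).eq
  rw [Rd3_mul_Qd3_sq_pow_six, mul_one, eq_comm] at h
  rw [Pd3_sq_conj]
  exact ((Matrix.isUnit_iff_isUnit_det _).2 isUnit_det_Pd3_sq).mul_eq_right.1 h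

lemma Pd3_sq_conj_mul_sq :
    (Pd3 ^ 2 * (Rd3 * Qd3 ^ 2) * (Pd3 ^ 2)⁻¹ * (Rd3 * Qd3 ^ 2 * Rd3)) ^ 2 = omega3 • 1 := by
  have := omega3_sq_add_omega3_add_one
  rw [Pd3_sq_conj, Rd3_mul_Qd3_sq, Rd3, sq]
  simp only [Matrix.mul_fin_three, Matrix.smul_of, Matrix.one_fin_three]
  ext i j; fin_cases i <;> fin_cases j <;> simp <;> grind

lemma isUnit_Rd3 : IsUnit Rd3 := IsUnit.of_mul_eq_one _ Rd3_mul_Rd3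

lemma isUnit_Rd3_mul_Qd3_sq : IsUnit (Rd3 * Qd3 ^ 2) :=
  IsUnit.of_pow_eq_one Rd3_mul_Qd3_sq_pow_six (by norm_num)

lemma isOfFinOrder_cls_Pd3_sq_conj : IsOfFinOrder (cls (Pd3 ^ 2 * (Rd3 * Qd3 ^ 2) * (Pd3 ^ 2)⁻¹)) :=
  isOfFinOrder_cls (by norm_num) Pd3_sq_conj_pow_six

lemma isOfFinOrder_cls_Pd3_sq_conj_mul_cls :
    IsOfFinOrder (cls (Pd3 ^ 2 * (Rd3 * Qd3 ^ 2) * (Pd3 ^ 2)⁻¹) * cls (Rd3 * Qd3 ^ 2 * Rd3)) := by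
  rw [← cls_mul (IsUnit.of_pow_eq_one Pd3_sq_conj_pow_six (by norm_num))
    (isUnit_Rd3_mul_Qd3_sq.mul isUnit_Rd3)]
  refine isOfFinOrder_cls (n := 2 * 3) (by norm_num) ?_
  rw [pow_mul, Pd3_sq_conj_mul_sq, smul_pow, one_pow, omega3_pow_three, one_smul]

lemma isOfFinOrder_cls_Rd3_mul_Qd3_sq_mul_Rd3_mul_cls :
    IsOfFinOrder (cls (Rd3 * Qd3 ^ 2 * Rd3) * cls (Qd3 ^ 2)) := by
  have hQ : IsUnit (Qd3 ^ 2) := by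
    rw [show Qd3 ^ 2 = Rd3 * (Rd3 * Qd3 ^ 2) by rw [← mul_assoc, Rd3_mul_Rd3, one_mul]]
    exact isUnit_Rd3.mul isUnit_Rd3_mul_Qd3_sq
  rw [← cls_mul (isUnit_Rd3_mul_Qd3_sq.mul isUnit_Rd3) hQ, mul_assoc, ← sq]
  refine isOfFinOrder_cls (n := 3) three_ne_zero ?_
  rw [← pow_mul, Rd3_mul_Qd3_sq_pow_six]

/-- the abelianization of the hybrid H'(3) is finite. -/
theorem stmt9 : Finite (Abelianization ↥H'3) :=
  Abelianization.finite_closure_of_isOfFinOrder isOfFinOrder_cls_Pd3_sq_conj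
    isOfFinOrder_cls_Pd3_sq_conj_mul_cls isOfFinOrder_cls_Rd3_mul_Qd3_sq_mul_Rd3_mul_cls

end
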